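/- arXiv:2002.03255 — 4 statements merged into one kernel-verified Lean document; each statement's English description precedes it below -/
import Mathlib

section
/- Let B ⊂ ℕ be a finite nonempty set. Then (1/N) ∑_{n=1}^N | ∑_{q∈B} 1_{q∣n} − ∑_{q∈B} 1/q |² = ∑_{q∈B} ∑_{q'∈B} (gcd(q,q')−1)/(q·q') + O(|B|²/N), where the implied constant is absolute. -/
/-!
Expanding the square turns the average over `n ≤ N` into a sum over pairs `(q, q')` of
correlations of the centred indicators `1_{q ∣ n} - 1/q`. Since `1_{q ∣ n} 1_{q' ∣ n} = 1_{lcm ∣ n}`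
and `#{n ≤ N : d ∣ n} = ⌊N/d⌋ = N/d + O(1)`, each correlation is
`1/lcm(q, q') - 1/(q q') = (gcd(q, q') - 1)/(q q')` up to an error of at most `3/N`.
-/

open Finset

noncomputable def centeredDvd (q n : ℕ) : ℝ := (if q ∣ n then 1 else 0) - 1 / q

lemma sum_Icc_ite_dvd (N d : ℕ) :
    ∑ n ∈ Icc 1 N, (if d ∣ n then (1 : ℝ) else 0) = ((N / d : ℕ) : ℝ) := by
  rw [sum_boole, ← Nat.Ioc_filter_dvd_card_eq_div, ← Icc_add_one_left_eq_Ioc, zero_add]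

lemma ite_dvd_mul_ite_dvd (q q' n : ℕ) :
    (if q ∣ n then (1 : ℝ) else 0) * (if q' ∣ n then 1 else 0)
      = if Nat.lcm q q' ∣ n then 1 else 0 := by
  simp only [ite_zero_mul_ite_zero, one_mul, Nat.lcm_dvd_iff]

lemma sum_Icc_centeredDvd_mul (N q q' : ℕ) :
    ∑ n ∈ Icc 1 N, centeredDvd q n * centeredDvd q' n
      = ((N / Nat.lcm q q' : ℕ) : ℝ) - 1 / q' * ((N / q : ℕ) : ℝ)
        - 1 / q * ((N / q' : ℕ) : ℝ) + N * (1 / q * (1 / q')) := by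
  simp only [centeredDvd, sub_mul, mul_sub, ite_dvd_mul_ite_dvd, sum_sub_distrib, ← sum_mul,
    ← mul_sum, sum_Icc_ite_dvd, sum_const, Nat.card_Icc, nsmul_eq_mul]
  push_cast
  ring

lemma abs_natDiv_div_sub_inv_le {N : ℕ} (d : ℕ) (hN : 0 < N) :
    |((N / d : ℕ) : ℝ) / N - 1 / d| ≤ 1 / N := by
  have hN' : (0 : ℝ) < N := by exact_mod_cast hN
  have hfloor := Nat.floor_div_eq_div (K := ℝ) N d
  have hle : ((N / d : ℕ) : ℝ) ≤ N / d := hfloor ▸ Nat.floor_le (by positivity)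
  have hlt : (N / d : ℝ) < (N / d : ℕ) + 1 := hfloor ▸ Nat.lt_floor_add_one _
  have hsplit : ((N / d : ℕ) : ℝ) / N - 1 / d = (((N / d : ℕ) : ℝ) - N / d) / N := by
    field_simp
  rw [hsplit, abs_div, abs_of_pos hN']
  gcongr
  rw [abs_le]
  constructor <;> linarith

lemma gcd_sub_one_div_mul (q q' : ℕ) :
    ((Nat.gcd q q' : ℝ) - 1) / (q * q') = 1 / Nat.lcm q q' - 1 / q * (1 / q') := by
  rcases Nat.eq_zero_or_pos q with rfl | hq
  · simp
  rcases Nat.eq_zero_or_pos q' with rfl | hq'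
  · simp
  have hgl : ((Nat.gcd q q' : ℕ) : ℝ) * Nat.lcm q q' = q * q' := by
    exact_mod_cast Nat.gcd_mul_lcm q q'
  have hl : (Nat.lcm q q' : ℝ) ≠ 0 := by positivity
  field_simp
  linear_combination hgl

lemma abs_mean_centeredDvd_mul_sub_le {N : ℕ} (q q' : ℕ) (hN : 0 < N) :
    |1 / (N : ℝ) * ∑ n ∈ Icc 1 N, centeredDvd q n * centeredDvd q' n
      - ((Nat.gcd q q' : ℝ) - 1) / (q * q')| ≤ 3 / N := by
  have hN' : (N : ℝ) ≠ 0 := by positivity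
  set err : ℕ → ℝ := fun d ↦ ((N / d : ℕ) : ℝ) / N - 1 / d with herr
  have hdecomp : 1 / (N : ℝ) * ∑ n ∈ Icc 1 N, centeredDvd q n * centeredDvd q' n
      - ((Nat.gcd q q' : ℝ) - 1) / (q * q')
      = err (Nat.lcm q q') - 1 / q' * err q - 1 / q * err q' := by
    rw [sum_Icc_centeredDvd_mul, gcd_sub_one_div_mul, herr]
    field_simp
    ring
  have herr_le (d : ℕ) : |err d| ≤ 1 / N := abs_natDiv_div_sub_inv_le d hN
  have hinv_le (d : ℕ) : |1 / (d : ℝ)| ≤ 1 := by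
    rw [one_div, abs_of_nonneg (by positivity)]
    exact Nat.cast_inv_le_one d
  rw [hdecomp]
  calc _ ≤ |err (Nat.lcm q q')| + |1 / (q' : ℝ)| * |err q| + |1 / (q : ℝ)| * |err q'| := by
        rw [← abs_mul, ← abs_mul]
        exact (abs_sub _ _).trans (add_le_add_left (abs_sub _ _) _)
    _ ≤ 1 / N + 1 * (1 / N) + 1 * (1 / N) := by
        gcongr <;> apply_rules
    _ = 3 / N := by ring

theorem stmt_5 :
    ∃ C : ℝ, 0 < C ∧ ∀ (B : Finset ℕ), B.Nonempty → (∀ q ∈ B, 0 < q) →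
      ∀ N : ℕ, 1 ≤ N →
        |(1 / (N : ℝ)) * ∑ n ∈ Icc 1 N,
            (∑ q ∈ B, (if q ∣ n then (1 : ℝ) else 0) - ∑ q ∈ B, (1 : ℝ) / q) ^ 2
          - ∑ q ∈ B, ∑ q' ∈ B, ((Nat.gcd q q' : ℝ) - 1) / (q * q')|
        ≤ C * (B.card : ℝ) ^ 2 / N := by
  refine ⟨3, by norm_num, fun B _ _ N hN ↦ ?_⟩
  have hsq (n : ℕ) : (∑ q ∈ B, (if q ∣ n then (1 : ℝ) else 0) - ∑ q ∈ B, (1 : ℝ) / q) ^ 2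
      = ∑ q ∈ B, ∑ q' ∈ B, centeredDvd q n * centeredDvd q' n := by
    rw [← sum_sub_distrib, sq, sum_mul_sum]
    rfl
  calc _ = |∑ q ∈ B, ∑ q' ∈ B, (1 / (N : ℝ) * ∑ n ∈ Icc 1 N, centeredDvd q n * centeredDvd q' n
          - ((Nat.gcd q q' : ℝ) - 1) / (q * q'))| := by
        simp only [hsq, sum_sub_distrib, mul_sum]
        rw [sum_comm]
        simp only [sum_comm (s := Icc 1 N)]
    _ ≤ ∑ q ∈ B, ∑ q' ∈ B, (3 : ℝ) / N :=
        (abs_sum_le_sum_abs _ _).trans <| sum_le_sum fun q _ ↦ (abs_sum_le_sum_abs _ _).trans <|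
          sum_le_sum fun q' _ ↦ abs_mean_centeredDvd_mul_sub_le q q' hN
    _ = 3 * (B.card : ℝ) ^ 2 / N := by
        simp only [sum_const, nsmul_eq_mul]
        ring
end

section
/- There is a constant C such that for all real x ≥ 2, the number of primes in (1, x] satisfies π(x) ≥ (log 2)·x/log x − C. -/
open Real

/-! Chebyshev's bound `ψ(x) ≥ (x - 1) log 2 - log (x + 2)` (from `2ⁿ ≤ (n + 1) lcm(1, …, n)`)
combines with `ψ(x) ≤ π(x) log x`; for `x ≥ 2` the error term `log 2 + log (x + 2)` is at most
`3 log x`. -/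

theorem log_add_two_le_log_two_add_log {x : ℝ} (hx : 2 ≤ x) :
    log (x + 2) ≤ log 2 + log x := by
  rw [← log_mul two_ne_zero (by positivity)]
  exact log_le_log (by positivity) (by linarith)

theorem stmt_10 :
    ∃ C : ℝ, ∀ x : ℝ, 2 ≤ x →
      (Nat.primeCounting ⌊x⌋₊ : ℝ) ≥ Real.log 2 * x / Real.log x - C := by
  refine ⟨3, fun x hx => ?_⟩
  have hlog2 : log 2 ≤ log x := log_le_log two_pos hx
  have hlogx : 0 < log x := (log_pos one_lt_two).trans_le hlog2
  have hchebyshev : (x - 1) * log 2 - log (x + 2) ≤ Nat.primeCounting ⌊x⌋₊ * log x :=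
    (Chebyshev.psi_ge' (by linarith)).trans (Chebyshev.psi_le_primeCounting_mul_log' x)
  have herror := log_add_two_le_log_two_add_log hx
  rw [ge_iff_le, sub_le_iff_le_add, div_le_iff₀ hlogx]
  linarith
end

section
/- There exists x₀ ≥ 1 such that for all real x ≥ x₀, the number of primes in (8^x, 8^{x+1}] is at least 8^x/x. -/
/-!
Chebyshev's bounds `θ(8y) ≥ 8y log 2 - O(√y log y)` and `θ(y) ≤ y log 4` give
`θ(8y) - θ(y) ≥ 6y log 2 - O(√y log y)`. Each prime in `(y, 8y]` contributes at most
`log 8y = 3(x + 1) log 2` to this difference when `y = 8^x`, so there are at least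
`2y/(x + 1) - O(√y)` such primes, which exceeds `y/x` once `x` is large.
-/

open Finset Real Chebyshev

lemma theta_sub_theta_le_card_mul_log (a b : ℝ) :
    θ b - θ a ≤ #{p ∈ range (⌊b⌋₊ + 1) | Nat.Prime p ∧ a < p ∧ p ≤ b} * log b := by
  have hsplit := sum_filter_add_sum_filter_not (Nat.primesLE ⌊b⌋₊) (fun p : ℕ => a < p)
    (fun p : ℕ => log p)
  have hset : {p ∈ Nat.primesLE ⌊b⌋₊ | a < ((p : ℕ) : ℝ)} =
      {p ∈ range (⌊b⌋₊ + 1) | Nat.Prime p ∧ a < p ∧ p ≤ b} := by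
    ext p
    simp only [mem_filter, Nat.mem_primesLE, mem_range, Nat.lt_succ_iff]
    constructor
    · rintro ⟨⟨hpb, hp⟩, hap⟩
      exact ⟨hpb, hp, hap, (Nat.le_floor_iff' hp.ne_zero).1 hpb⟩
    · rintro ⟨hpb, hp, hap, -⟩
      exact ⟨⟨hpb, hp⟩, hap⟩
  have hlow : ∑ p ∈ Nat.primesLE ⌊b⌋₊ with ¬ a < ((p : ℕ) : ℝ), log p ≤ θ a := by
    rw [theta_eq_sum_primesLE]
    refine sum_le_sum_of_subset_of_nonneg (fun p hp => ?_) fun p _ _ => log_natCast_nonneg p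
    simp only [mem_filter, Nat.mem_primesLE, not_lt] at hp ⊢
    exact ⟨Nat.le_floor hp.2, hp.1.2⟩
  have hhigh : ∑ p ∈ Nat.primesLE ⌊b⌋₊ with a < ((p : ℕ) : ℝ), log p ≤
      #{p ∈ range (⌊b⌋₊ + 1) | Nat.Prime p ∧ a < p ∧ p ≤ b} * log b := by
    rw [hset, ← nsmul_eq_mul]
    refine sum_le_card_nsmul _ _ _ fun p hp => ?_
    simp only [mem_filter] at hp
    exact log_le_log (by exact_mod_cast hp.2.1.pos) hp.2.2.2
  rw [theta_eq_sum_primesLE b, ← hsplit]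
  linarith

lemma theta_eight_mul_sub_theta_ge {y : ℝ} (hy : 1 ≤ y) :
    (6 * y - 1) * log 2 - log (8 * y + 2) - 2 * √(8 * y) * log (8 * y) ≤ θ (8 * y) - θ y := by
  have hlow := theta_ge' (x := 8 * y) (by linarith)
  have hup := theta_le_log4_mul_x (x := y) (by linarith)
  have hlog4 : log 4 = 2 * log 2 := by
    rw [show (4 : ℝ) = 2 ^ 2 by norm_num, log_pow, Nat.cast_ofNat]
  rw [hlog4] at hup
  linarith

lemma rpow_div_two_sq {a : ℝ} (ha : 0 ≤ a) (x : ℝ) : (a ^ (x / 2)) ^ 2 = a ^ x := by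
  rw [← rpow_natCast, ← rpow_mul ha]
  ring_nf

lemma sq_le_two_mul_eight_rpow_half {x : ℝ} (hx : 0 ≤ x) : x ^ 2 ≤ 2 * 8 ^ (x / 2) := by
  have hlog8 : 2 ≤ log 8 := by
    rw [show (8 : ℝ) = 2 ^ 3 by norm_num, log_pow, Nat.cast_ofNat]
    linarith [log_two_gt_d9]
  calc x ^ 2 ≤ 2 * exp x := by linarith [quadratic_le_exp_of_nonneg hx]
    _ ≤ 2 * 8 ^ (x / 2) := by
      rw [rpow_def_of_pos (by norm_num)]
      gcongr
      nlinarith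

lemma card_primes_Ioc_eight_rpow_ge {x : ℝ} (hx : 0 ≤ x) :
    6 * 8 ^ x - 3 * x - 5 - 18 * 8 ^ (x / 2) * (x + 1) ≤ 3 * (x + 1) *
      #{p ∈ range (⌊(8 : ℝ) ^ (x + 1)⌋₊ + 1) |
        Nat.Prime p ∧ (8 : ℝ) ^ x < p ∧ p ≤ (8 : ℝ) ^ (x + 1)} := by
  set s : ℝ := 8 ^ (x / 2)
  have hy : (8 : ℝ) ^ x = s ^ 2 := (rpow_div_two_sq (by norm_num) x).symm
  have hy8 : (8 : ℝ) ^ (x + 1) = 8 * s ^ 2 := by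
    rw [rpow_add_one (by norm_num), hy, mul_comm]
  have hs : 1 ≤ s := one_le_rpow (by norm_num) (by linarith)
  have hL : 0 < log 2 := log_pos one_lt_two
  have hlog : log (8 * s ^ 2) = 3 * (x + 1) * log 2 := by
    rw [← hy8, log_rpow (by norm_num), show (8 : ℝ) = 2 ^ 3 by norm_num, log_pow,
      Nat.cast_ofNat]
    ring
  have hsqrt : √(8 * s ^ 2) ≤ 3 * s := by
    rw [sqrt_le_iff]
    constructor <;> nlinarith
  have hlog_add : log (8 * s ^ 2 + 2) ≤ (3 * x + 4) * log 2 := by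
    calc log (8 * s ^ 2 + 2) ≤ log (2 * (8 * s ^ 2)) := log_le_log (by positivity) (by nlinarith)
      _ = (3 * x + 4) * log 2 := by rw [log_mul two_ne_zero (by positivity), hlog]; ring
  have key := (theta_eight_mul_sub_theta_ge (y := s ^ 2) (by nlinarith)).trans
    (theta_sub_theta_le_card_mul_log (s ^ 2) (8 * s ^ 2))
  rw [hlog] at key
  have hsqrt_log : 2 * √(8 * s ^ 2) * (3 * (x + 1) * log 2) ≤
      2 * (3 * s) * (3 * (x + 1) * log 2) := by
    gcongr
  rw [hy, hy8]
  refine le_of_mul_le_mul_right ?_ hL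
  nlinarith

theorem stmt_13 :
    ∃ x₀ : ℝ, 1 ≤ x₀ ∧ ∀ x : ℝ, x₀ ≤ x →
      (8 : ℝ) ^ x / x ≤
        (((Finset.range (⌊(8 : ℝ) ^ (x + 1)⌋₊ + 1)).filter
            (fun p => Nat.Prime p ∧ (8 : ℝ) ^ x < (p : ℝ) ∧ (p : ℝ) ≤ (8 : ℝ) ^ (x + 1))).card : ℝ) := by
  refine ⟨50, by norm_num, fun x hx => ?_⟩
  have hcount := card_primes_Ioc_eight_rpow_ge (x := x) (by linarith)
  set s : ℝ := 8 ^ (x / 2)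
  have hy : (8 : ℝ) ^ x = s ^ 2 := (rpow_div_two_sq (by norm_num) x).symm
  have hs : 20 * (x + 1) ≤ s := by
    nlinarith [sq_le_two_mul_eight_rpow_half (x := x) (by linarith)]
  have herr : 3 * x + 5 + 18 * s * (x + 1) ≤ s ^ 2 := by nlinarith
  rw [div_le_iff₀ (by linarith), hy]
  rw [hy] at hcount
  nlinarith
end

section
/- Fix x₀ ≥ 1 and ε > 0. Suppose X ⊆ ℝ has the property that for every integer n ≥ x₀ there exist x, y ∈ X ∩ [n, n+1) with ε⁴ < y − x < ε. Let k ≥ ⌈2/ε⁴⌉. Then for all integers n₁, …, n_k ≥ x₀ there exist z, z₁, …, z_k ∈ X such that z_i ∈ [n_i, n_i + 1) for each i, and z₁ + ⋯ + z_k ∈ [z, z + ε). -/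
/-!
Pick `x_i < y_i` in `X ∩ [n_i, n_i + 1)` with `ε⁴ < y_i - x_i < ε`. Replacing the `x_i` by the
`y_i` one at a time moves the sum from `∑ x_i` to `∑ y_i ≥ ∑ x_i + k ε⁴ ≥ ∑ x_i + 2` in steps
shorter than `ε`, so it cannot jump over the window `[z, z + ε)` of any `z` between the two ends.
Such a `z ∈ X` exists in `[m, m + 1)` for `m = ⌊∑ x_i⌋ + 1`.
-/

open Finset Set

theorem exists_sum_mem_Ico_of_lt_add {α : Type*} [AddCommGroup α] [LinearOrder α]
    [IsOrderedAddMonoid α] {ε : α} :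
    ∀ {k : ℕ} (x y : Fin k → α) {z : α}, (∀ i, y i < x i + ε) →
      ∑ i, x i < z → z ≤ ∑ i, y i →
      ∃ w : Fin k → α, (∀ i, w i = x i ∨ w i = y i) ∧ ∑ i, w i ∈ Ico z (z + ε)
  | 0, _, _, _, _, hx, hy => by
    rw [Fin.sum_univ_zero] at hx hy
    exact (hx.trans_le hy).false.elim
  | k + 1, x, y, z, hxy, hx, hy => by
    rw [Fin.sum_univ_succ] at hx hy
    by_cases hz : z ≤ x 0 + ∑ i : Fin k, y i.succ
    · obtain ⟨w, hw, hsum⟩ := exists_sum_mem_Ico_of_lt_add (fun i => x i.succ) (fun i => y i.succ)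
        (z := z - x 0) (fun i => hxy i.succ) (lt_sub_iff_add_lt'.2 hx) (sub_le_iff_le_add'.2 hz)
      refine ⟨Fin.cons (x 0) w, Fin.cases (by simp) (by simpa using hw), ?_⟩
      rwa [Fin.sum_univ_succ, Fin.cons_zero, Set.add_mem_Ico_iff_right, ← sub_add_eq_add_sub]
    · refine ⟨y, fun i => Or.inr rfl, by rw [Fin.sum_univ_succ]; exact hy, ?_⟩
      calc ∑ i, y i = y 0 + ∑ i : Fin k, y i.succ := Fin.sum_univ_succ y
        _ < x 0 + ε + ∑ i : Fin k, y i.succ := by gcongr; exact hxy 0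
        _ = x 0 + ∑ i : Fin k, y i.succ + ε := add_right_comm _ _ _
        _ < z + ε := by gcongr; exact not_le.1 hz

theorem stmt_16_general (x₀ : ℝ) (ε : ℝ) (hε : 0 < ε) (X : Set ℝ)
    (hX : ∀ n : ℕ, x₀ ≤ (n : ℝ) →
      ∃ x ∈ X, ∃ y ∈ X, x ∈ Set.Ico (n : ℝ) (n + 1) ∧ y ∈ Set.Ico (n : ℝ) (n + 1) ∧
        ε ^ 4 < y - x ∧ y - x < ε)
    (k : ℕ) (hk : ⌈2 / ε ^ 4⌉₊ ≤ k)
    (nv : Fin k → ℕ) (hnv : ∀ i, x₀ ≤ (nv i : ℝ)) :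
    ∃ z ∈ X, ∃ zv : Fin k → ℝ,
      (∀ i, zv i ∈ X ∧ zv i ∈ Set.Ico ((nv i : ℝ)) ((nv i : ℝ) + 1)) ∧
      (∑ i, zv i) ∈ Set.Ico z (z + ε) := by
  have hkε : 2 ≤ k * ε ^ 4 :=
    (div_le_iff₀ (by positivity)).1 ((Nat.le_ceil _).trans (by exact_mod_cast hk))
  have hk_pos : 0 < k := Nat.pos_of_ne_zero (by rintro rfl; norm_num at hkε)
  choose x hxX y hyX hxI hyI hlo hhi using fun i => hX (nv i) (hnv i)
  have hx_nonneg (i : Fin k) : 0 ≤ x i := (Nat.cast_nonneg _).trans (hxI i).1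
  set S := ∑ i, x i
  have hx₀S : x₀ ≤ S := calc
    x₀ ≤ nv ⟨0, hk_pos⟩ := hnv _
    _ ≤ x ⟨0, hk_pos⟩ := (hxI _).1
    _ ≤ S := single_le_sum (fun i _ => hx_nonneg i) (mem_univ _)
  have hSy : S + 2 ≤ ∑ i, y i := calc
    S + 2 ≤ S + k * ε ^ 4 := by gcongr
    _ = ∑ i, (x i + ε ^ 4) := by simp [sum_add_distrib, S]
    _ ≤ ∑ i, y i := sum_le_sum fun i _ => by linarith [hlo i]
  have hS_floor := Nat.lt_floor_add_one S
  have hfloor_S : (⌊S⌋₊ : ℝ) ≤ S := Nat.floor_le (sum_nonneg fun i _ => hx_nonneg i)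
  obtain ⟨z, hzX, -, -, hzI, -⟩ := hX (⌊S⌋₊ + 1) (by push_cast; linarith)
  push_cast at hzI
  obtain ⟨w, hw, hwz⟩ := exists_sum_mem_Ico_of_lt_add x y (ε := ε) (fun i => by linarith [hhi i])
    (hS_floor.trans_le hzI.1) (by linarith [hzI.2])
  refine ⟨z, hzX, w, fun i => ?_, hwz⟩
  rcases hw i with h | h <;> rw [h]
  exacts [⟨hxX i, hxI i⟩, ⟨hyX i, hyI i⟩]

theorem stmt_16 (x₀ : ℝ) (hx₀ : 1 ≤ x₀) (ε : ℝ) (hε : 0 < ε) (X : Set ℝ)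
    (hX : ∀ n : ℕ, x₀ ≤ (n : ℝ) →
      ∃ x ∈ X, ∃ y ∈ X, x ∈ Set.Ico (n : ℝ) (n + 1) ∧ y ∈ Set.Ico (n : ℝ) (n + 1) ∧
        ε ^ 4 < y - x ∧ y - x < ε)
    (k : ℕ) (hk : ⌈2 / ε ^ 4⌉₊ ≤ k)
    (nv : Fin k → ℕ) (hnv : ∀ i, x₀ ≤ (nv i : ℝ)) :
    ∃ z ∈ X, ∃ zv : Fin k → ℝ,
      (∀ i, zv i ∈ X ∧ zv i ∈ Set.Ico ((nv i : ℝ)) ((nv i : ℝ) + 1)) ∧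
      (∑ i, zv i) ∈ Set.Ico z (z + ε) :=
  stmt_16_general x₀ ε hε X hX k hk nv hnv
end
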